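/- arXiv:2412.08408 — 4 statements merged into one kernel-verified Lean document; each statement's English description precedes it below -/
import Mathlib

section
/- Let n ≥ 2 and m ≥ 1 be integers, let 1 < p < n be a real number and set p' = p/(p-1). Then ∫_{ℝ^{n+m}} |y|^{p'} (1 + |y|^{p'})^{-n - m/p'} dy = ((n+m)(p-1)/(n-p)) · ∫_{ℝ^{n+m}} (1 + |y|^{p'})^{-n - m/p'} dy, where |y| is the Euclidean norm on ℝ^{n+m}; in particular the left-hand integral is finite. -/
/-! In polar coordinates both integrals become one-variable integrals
`I(a) = ∫₀^∞ r^(N-1) (1 + r^q)^(-a) dr` with `N = n + m` and `q = p'`. Since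
`r^q (1 + r^q)^(-(a+1)) = (1 + r^q)^(-a) - (1 + r^q)^(-(a+1))`, the left-hand side is
`I(s-1) - I(s)` for `s = n + m/q`, and integrating the derivative of `r^N (1 + r^q)^(-a)` over
`(0, ∞)` gives the recurrence `q a I(a+1) = (q a - N) I(a)` whenever `N < q a`. For `a = s - 1`
one has `q a - N = (n - p)/(p - 1)`. -/

open Real MeasureTheory Set Filter Module

lemma one_add_rpow_le_two_rpow_mul {t q : ℝ} (ht : 0 ≤ t) (hq : 0 ≤ q) :
    (1 + t) ^ q ≤ 2 ^ q * (1 + t ^ q) := by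
  have hmax : max 1 t ^ q ≤ 1 + t ^ q := by
    rcases le_total 1 t with h | h
    · rw [max_eq_right h]; linarith
    · rw [max_eq_left h, one_rpow]; linarith [rpow_nonneg ht q]
  calc (1 + t) ^ q ≤ (2 * max 1 t) ^ q := by
        gcongr; linarith [le_max_left 1 t, le_max_right 1 t]
    _ = 2 ^ q * max 1 t ^ q := mul_rpow zero_le_two (by positivity)
    _ ≤ 2 ^ q * (1 + t ^ q) := by gcongr

lemma one_add_rpow_rpow_neg_le {t q a : ℝ} (ht : 0 ≤ t) (hq : 0 ≤ q) (ha : 0 ≤ a) :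
    (1 + t ^ q) ^ (-a) ≤ 2 ^ (q * a) * (1 + t) ^ (-(q * a)) := by
  have h2q : (0 : ℝ) < 2 ^ q := by positivity
  calc (1 + t ^ q) ^ (-a) ≤ ((1 + t) ^ q / 2 ^ q) ^ (-a) := by
        refine rpow_le_rpow_of_nonpos (by positivity) ?_ (by linarith)
        rw [div_le_iff₀' h2q]
        exact one_add_rpow_le_two_rpow_mul ht hq
    _ = 2 ^ (q * a) * (1 + t) ^ (-(q * a)) := by
        rw [div_rpow (by positivity) h2q.le, ← rpow_mul (by positivity), ← rpow_mul zero_le_two,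
          mul_neg, rpow_neg zero_le_two, div_eq_mul_inv, inv_inv, mul_comm]

lemma mul_one_add_rpow_neg_add_one {x : ℝ} (hx : 0 < 1 + x) (a : ℝ) :
    x * (1 + x) ^ (-(a + 1)) = (1 + x) ^ (-a) - (1 + x) ^ (-(a + 1)) := by
  have : (1 + x) ^ (-a) = (1 + x) * (1 + x) ^ (-(a + 1)) := by
    rw [mul_comm, ← rpow_add_one hx.ne']; ring_nf
  rw [this]; ring

lemma hasDerivAt_pow_mul_one_add_rpow_rpow_neg {N : ℕ} (hN : N ≠ 0) {q : ℝ} (a : ℝ) {r : ℝ}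
    (hr : 0 < r) :
    HasDerivAt (fun x : ℝ => x ^ N * (1 + x ^ q) ^ (-a))
      (q * a * (r ^ (N - 1) * (1 + r ^ q) ^ (-(a + 1))) -
        (q * a - N) * (r ^ (N - 1) * (1 + r ^ q) ^ (-a))) r := by
  have hbase : 0 < 1 + r ^ q := by positivity
  have hpow : HasDerivAt (fun x : ℝ => 1 + x ^ q) (q * r ^ (q - 1)) r :=
    (hasDerivAt_rpow_const (Or.inl hr.ne')).const_add 1
  refine ((hasDerivAt_pow N r).mul (hpow.rpow_const (p := -a) (Or.inl hbase.ne'))).congr_deriv ?_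
  have hsplit := mul_one_add_rpow_neg_add_one hbase a
  have hrN : r ^ N = r ^ (N - 1) * r := by
    rw [← pow_succ, Nat.sub_add_cancel (Nat.one_le_iff_ne_zero.2 hN)]
  have hrq : r ^ (q - 1) * r = r ^ q := by rw [rpow_sub_one hr.ne', div_mul_cancel₀ _ hr.ne']
  rw [show -a - 1 = -(a + 1) by ring, hrN]
  linear_combination (-(q * a) * r ^ (N - 1)) * hsplit
    - (q * a * r ^ (N - 1) * (1 + r ^ q) ^ (-(a + 1))) * hrq

section HaarMeasure

variable {E : Type*} [NormedAddCommGroup E] [NormedSpace ℝ E] [FiniteDimensional ℝ E]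
  [MeasurableSpace E] [BorelSpace E] (μ : Measure E) [μ.IsAddHaarMeasure]

lemma integrable_one_add_norm_rpow_rpow_neg {q a : ℝ} (hq : 0 < q)
    (hqa : finrank ℝ E < q * a) : Integrable (fun y : E => (1 + ‖y‖ ^ q) ^ (-a)) μ := by
  have ha : 0 < a := pos_of_mul_pos_right ((Nat.cast_nonneg _).trans_lt hqa) hq.le
  refine ((integrable_one_add_norm hqa).const_mul (2 ^ (q * a))).mono'
    (Measurable.aestronglyMeasurable (by fun_prop)) (.of_forall fun y => ?_)
  rw [norm_of_nonneg (by positivity)]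
  exact one_add_rpow_rpow_neg_le (norm_nonneg y) hq.le ha.le

/-- Proved in polar coordinates on `EuclideanSpace ℝ (Fin N)`. -/
lemma integrableOn_pow_mul_one_add_rpow_rpow_neg {N : ℕ} (hN : N ≠ 0) {q a : ℝ} (hq : 0 < q)
    (hqa : N < q * a) : IntegrableOn (fun r : ℝ => r ^ (N - 1) * (1 + r ^ q) ^ (-a)) (Ioi 0) := by
  have : Nonempty (Fin N) := Fin.pos_iff_nonempty.1 (Nat.pos_of_ne_zero hN)
  have h := (integrable_fun_norm_addHaar (volume : Measure (EuclideanSpace ℝ (Fin N)))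
    (f := fun r => (1 + r ^ q) ^ (-a))).1
    (integrable_one_add_norm_rpow_rpow_neg volume hq (by rwa [finrank_euclideanSpace_fin]))
  simpa only [finrank_euclideanSpace_fin, smul_eq_mul] using h

lemma tendsto_pow_mul_one_add_rpow_rpow_neg_atTop (N : ℕ) {q a : ℝ} (hq : 0 < q)
    (hqa : N < q * a) : Tendsto (fun r : ℝ => r ^ N * (1 + r ^ q) ^ (-a)) atTop (nhds 0) := by
  have ha : 0 < a := pos_of_mul_pos_right ((Nat.cast_nonneg _).trans_lt hqa) hq.le
  refine squeeze_zero' ?_ ?_ (tendsto_rpow_neg_atTop (sub_pos.2 hqa))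
  · filter_upwards [eventually_gt_atTop 0] with r hr
    positivity
  · filter_upwards [eventually_gt_atTop 0] with r hr
    calc r ^ N * (1 + r ^ q) ^ (-a) ≤ r ^ N * (r ^ q) ^ (-a) := by
          have hrq : 0 < r ^ q := by positivity
          exact mul_le_mul_of_nonneg_left
            (rpow_le_rpow_of_nonpos hrq (by linarith) (by linarith)) (by positivity)
      _ = r ^ (-(q * a - N)) := by
          rw [← rpow_natCast, ← rpow_mul hr.le, ← rpow_add hr]; ring_nf

lemma integral_pow_mul_one_add_rpow_rpow_neg_add_one {N : ℕ} (hN : N ≠ 0) {q a : ℝ} (hq : 0 < q)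
    (hqa : N < q * a) :
    q * a * ∫ r in Ioi 0, r ^ (N - 1) * (1 + r ^ q) ^ (-(a + 1)) =
      (q * a - N) * ∫ r in Ioi 0, r ^ (N - 1) * (1 + r ^ q) ^ (-a) := by
  have hI := integrableOn_pow_mul_one_add_rpow_rpow_neg hN hq hqa
  have hI₁ := integrableOn_pow_mul_one_add_rpow_rpow_neg hN hq (a := a + 1) (by nlinarith)
  have hcont : ContinuousWithinAt (fun x : ℝ => x ^ N * (1 + x ^ q) ^ (-a)) (Ici 0) 0 := by
    refine ContinuousAt.continuousWithinAt ?_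
    have h1 : ContinuousAt (fun x : ℝ => 1 + x ^ q) 0 :=
      continuousAt_const.add (continuousAt_rpow_const 0 q (Or.inr hq.le))
    exact (continuous_pow N).continuousAt.mul (h1.rpow_const (Or.inl (by simp [zero_rpow hq.ne'])))
  have hFTC := integral_Ioi_of_hasDerivAt_of_tendsto hcont
    (fun r hr => hasDerivAt_pow_mul_one_add_rpow_rpow_neg hN a hr)
    ((hI₁.const_mul (q * a)).sub (hI.const_mul (q * a - N)))
    (tendsto_pow_mul_one_add_rpow_rpow_neg_atTop N hq hqa)
  rwa [integral_sub (hI₁.const_mul _) (hI.const_mul _), integral_const_mul, integral_const_mul,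
    zero_pow hN, zero_mul, sub_zero, sub_eq_zero] at hFTC

theorem integral_one_add_norm_rpow_rpow_neg_add_one [Nontrivial E] {q a : ℝ} (hq : 0 < q)
    (hqa : finrank ℝ E < q * a) :
    q * a * ∫ y, (1 + ‖y‖ ^ q) ^ (-(a + 1)) ∂μ =
      (q * a - finrank ℝ E) * ∫ y, (1 + ‖y‖ ^ q) ^ (-a) ∂μ := by
  rw [integral_fun_norm_addHaar μ (fun t => (1 + t ^ q) ^ (-(a + 1))),
    integral_fun_norm_addHaar μ (fun t => (1 + t ^ q) ^ (-a))]
  simp only [smul_eq_mul, nsmul_eq_mul]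
  rw [mul_left_comm, mul_left_comm _ (μ.real _), integral_pow_mul_one_add_rpow_rpow_neg_add_one
    finrank_pos.ne' hq hqa]
  ring

lemma integrable_norm_rpow_mul_one_add_norm_rpow_rpow_neg {q a : ℝ} (hq : 0 < q)
    (hqa : finrank ℝ E < q * a) :
    Integrable (fun y : E => ‖y‖ ^ q * (1 + ‖y‖ ^ q) ^ (-(a + 1))) μ :=
  ((integrable_one_add_norm_rpow_rpow_neg μ hq hqa).sub
    (integrable_one_add_norm_rpow_rpow_neg μ hq (a := a + 1) (by nlinarith))).congr
    (.of_forall fun y => (mul_one_add_rpow_neg_add_one (by positivity) a).symm)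

theorem integral_norm_rpow_mul_one_add_norm_rpow_rpow_neg [Nontrivial E] {q a : ℝ} (hq : 0 < q)
    (hqa : finrank ℝ E < q * a) :
    ∫ y, ‖y‖ ^ q * (1 + ‖y‖ ^ q) ^ (-(a + 1)) ∂μ =
      finrank ℝ E / (q * a - finrank ℝ E) * ∫ y, (1 + ‖y‖ ^ q) ^ (-(a + 1)) ∂μ := by
  have hsplit : ∀ y : E, ‖y‖ ^ q * (1 + ‖y‖ ^ q) ^ (-(a + 1)) =
      (1 + ‖y‖ ^ q) ^ (-a) - (1 + ‖y‖ ^ q) ^ (-(a + 1)) := fun y =>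
    mul_one_add_rpow_neg_add_one (by positivity) a
  have hrec := integral_one_add_norm_rpow_rpow_neg_add_one μ hq hqa
  simp_rw [hsplit]
  rw [integral_sub (integrable_one_add_norm_rpow_rpow_neg μ hq hqa)
    (integrable_one_add_norm_rpow_rpow_neg μ hq (a := a + 1) (by nlinarith)),
    div_mul_eq_mul_div, eq_div_iff (by linarith)]
  linear_combination -hrec

end HaarMeasure

theorem stmt_2_general (n m : ℕ) (p : ℝ) (hp1 : 1 < p) (hpn : p < n) :
    ((∫ y : EuclideanSpace ℝ (Fin (n + m)),
        ‖y‖ ^ (p / (p - 1)) * (1 + ‖y‖ ^ (p / (p - 1))) ^ (-(n : ℝ) - m / (p / (p - 1)))) =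
      (((n : ℝ) + m) * (p - 1) / ((n : ℝ) - p)) *
        ∫ y : EuclideanSpace ℝ (Fin (n + m)),
          (1 + ‖y‖ ^ (p / (p - 1))) ^ (-(n : ℝ) - m / (p / (p - 1)))) ∧
    MeasureTheory.Integrable (fun y : EuclideanSpace ℝ (Fin (n + m)) =>
      ‖y‖ ^ (p / (p - 1)) * (1 + ‖y‖ ^ (p / (p - 1))) ^ (-(n : ℝ) - m / (p / (p - 1)))) := by
  have hp : p - 1 ≠ 0 := by linarith
  have hp₀ : p ≠ 0 := by linarith
  set q := p / (p - 1) with hq_def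
  have hq : 0 < q := div_pos (by linarith) (by linarith)
  set a := (n : ℝ) + m / q - 1
  have hexp : -(n : ℝ) - m / q = -(a + 1) := by ring
  have hgap : q * a - (n + m : ℕ) = (n - p) / (p - 1) := by
    simp only [a, hq_def]; push_cast; field_simp; ring
  have hqa : (finrank ℝ (EuclideanSpace ℝ (Fin (n + m))) : ℝ) < q * a := by
    rw [finrank_euclideanSpace_fin]
    linarith [div_pos (by linarith : (0 : ℝ) < n - p) (by linarith : (0 : ℝ) < p - 1)]
  have : Nonempty (Fin (n + m)) := ⟨⟨0, by exact_mod_cast (by linarith : (0 : ℝ) < n + m)⟩⟩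
  rw [hexp]
  refine ⟨?_, integrable_norm_rpow_mul_one_add_norm_rpow_rpow_neg volume hq hqa⟩
  rw [integral_norm_rpow_mul_one_add_norm_rpow_rpow_neg volume hq hqa, finrank_euclideanSpace_fin,
    hgap, div_div_eq_mul_div]
  push_cast
  rfl

theorem stmt_2 (n m : ℕ) (hn : 2 ≤ n) (hm : 1 ≤ m) (p : ℝ) (hp1 : 1 < p) (hpn : p < n) :
    ((∫ y : EuclideanSpace ℝ (Fin (n + m)),
        ‖y‖ ^ (p / (p - 1)) * (1 + ‖y‖ ^ (p / (p - 1))) ^ (-(n : ℝ) - m / (p / (p - 1)))) =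
      (((n : ℝ) + m) * (p - 1) / ((n : ℝ) - p)) *
        ∫ y : EuclideanSpace ℝ (Fin (n + m)),
          (1 + ‖y‖ ^ (p / (p - 1))) ^ (-(n : ℝ) - m / (p / (p - 1)))) ∧
    MeasureTheory.Integrable (fun y : EuclideanSpace ℝ (Fin (n + m)) =>
      ‖y‖ ^ (p / (p - 1)) * (1 + ‖y‖ ^ (p / (p - 1))) ^ (-(n : ℝ) - m / (p / (p - 1)))) :=
  stmt_2_general n m p hp1 hpn
end

section
/- Let n ≥ 1 and m ≥ 1 be integers and let q > 1, λ > 0 and c > 0 be real numbers. Then ∫_{ℝ^m} (λ + c|v|^q)^{-n - m/q} dv = λ^{-n} c^{-m/q} · m ω_m · Γ(n) Γ(m/q) / (q Γ(n + m/q)), where |v| is the Euclidean norm on ℝ^m. -/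
open Real MeasureTheory

open Set

lemma real_beta {a b : ℝ} (ha : 0 < a) (hb : 0 < b) :
    ∫ x in (0:ℝ)..1, x ^ (a-1) * (1-x) ^ (b-1) =
      Real.Gamma a * Real.Gamma b / Real.Gamma (a+b) := by
  have h := Complex.Gamma_mul_Gamma_eq_betaIntegral (s := (a:ℂ)) (t := (b:ℂ))
    (by simpa using ha) (by simpa using hb)
  have hbeta : Complex.betaIntegral a b =
      ((∫ x in (0:ℝ)..1, x ^ (a-1) * (1-x) ^ (b-1) : ℝ) : ℂ) := by
    rw [← intervalIntegral.integral_ofReal, Complex.betaIntegral]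
    refine intervalIntegral.integral_congr fun x hx => ?_
    rw [Set.uIcc_of_le (by norm_num : (0:ℝ) ≤ 1)] at hx
    obtain ⟨hx0, hx1⟩ := hx
    push_cast
    rw [Complex.ofReal_cpow hx0, Complex.ofReal_cpow (by linarith)]
    push_cast
    ring
  rw [hbeta, ← Complex.ofReal_add, Complex.Gamma_ofReal, Complex.Gamma_ofReal,
    Complex.Gamma_ofReal] at h
  have : Real.Gamma a * Real.Gamma b
      = Real.Gamma (a+b) * ∫ x in (0:ℝ)..1, x ^ (a-1) * (1-x) ^ (b-1) := by
    exact_mod_cast h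
  have hG : Real.Gamma (a+b) ≠ 0 := (Real.Gamma_pos_of_pos (by linarith)).ne'
  field_simp
  linarith [this]

lemma beta_Ioi {a b : ℝ} (ha : 0 < a) (hb : 0 < b) :
    ∫ t in Set.Ioi (0:ℝ), t ^ (a-1) * (1+t) ^ (-(a+b)) =
      Real.Gamma a * Real.Gamma b / Real.Gamma (a+b) := by
  have himg : (fun x : ℝ => x / (1-x)) '' Set.Ioo 0 1 = Set.Ioi (0:ℝ) := by
    ext t
    constructor
    · rintro ⟨x, ⟨hx0, hx1⟩, rfl⟩
      exact div_pos hx0 (by linarith)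
    · intro ht
      rw [Set.mem_Ioi] at ht
      refine ⟨t/(1+t), ⟨div_pos ht (by linarith), by rw [div_lt_one (by linarith)]; linarith⟩, ?_⟩
      field_simp
      ring
  have hderiv : ∀ x ∈ Set.Ioo (0:ℝ) 1, HasDerivWithinAt (fun x : ℝ => x / (1-x))
      (((1-x)^2)⁻¹) (Set.Ioo 0 1) x := by
    intro x hx
    have h1 : (1:ℝ) - x ≠ 0 := (by linarith [hx.2] : (0:ℝ) < 1 - x).ne'
    have := (hasDerivAt_id x).div ((hasDerivAt_const x (1:ℝ)).sub (hasDerivAt_id x)) h1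
    refine this.hasDerivWithinAt.congr_deriv ?_
    simp only [Pi.sub_apply, id]
    field_simp
    ring
  have hinj : Set.InjOn (fun x : ℝ => x / (1-x)) (Set.Ioo 0 1) := by
    intro x hx y hy hxy
    have h1 : (1:ℝ) - x ≠ 0 := (by linarith [hx.2] : (0:ℝ) < 1 - x).ne'
    have h2 : (1:ℝ) - y ≠ 0 := (by linarith [hy.2] : (0:ℝ) < 1 - y).ne'
    field_simp at hxy
    ring_nf at hxy
    linarith
  rw [← himg, integral_image_eq_integral_abs_deriv_smul measurableSet_Ioo hderiv hinj,
    ← real_beta ha hb, intervalIntegral.integral_of_le (by norm_num : (0:ℝ) ≤ 1),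
    MeasureTheory.integral_Ioc_eq_integral_Ioo]
  refine setIntegral_congr_fun measurableSet_Ioo fun x hx => ?_
  obtain ⟨hx0, hx1⟩ := hx
  have h1 : (0:ℝ) < 1 - x := by linarith
  have h2 : 1 + x / (1-x) = (1-x)⁻¹ := by field_simp; ring
  rw [smul_eq_mul, h2, abs_of_pos (by positivity : (0:ℝ) < ((1-x)^2)⁻¹),
    Real.div_rpow hx0.le h1.le, Real.inv_rpow h1.le, ← Real.rpow_neg h1.le, neg_neg,
    div_eq_mul_inv, ← Real.rpow_neg h1.le,
    show ((1-x)^2 : ℝ)⁻¹ = (1-x) ^ (-2 : ℝ) by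
      rw [← Real.rpow_natCast (1-x) 2, ← Real.rpow_neg h1.le]; norm_num]
  have key : (1-x) ^ (-2:ℝ) * ((1-x) ^ (-(a-1)) * (1-x) ^ (a+b)) = (1-x) ^ (b-1) := by
    rw [← Real.rpow_add h1, ← Real.rpow_add h1]
    congr 1
    ring
  calc (1-x)^(-2:ℝ) * (x^(a-1) * (1-x)^(-(a-1)) * (1-x)^(a+b))
      = x^(a-1) * ((1-x)^(-2:ℝ) * ((1-x)^(-(a-1)) * (1-x)^(a+b))) := by ring
    _ = x^(a-1) * (1-x)^(b-1) := by rw [key]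

lemma oneD (n m : ℕ) (hn : 1 ≤ n) (hm : 1 ≤ m) (q lam c : ℝ)
    (hq : 1 < q) (hlam : 0 < lam) (hc : 0 < c) :
    ∫ y in Set.Ioi (0:ℝ), y ^ (m-1) * (lam + c * y ^ q) ^ (-(n:ℝ) - (m:ℝ)/q) =
      lam ^ (-(n:ℝ)) * c ^ (-(m:ℝ)/q) / q *
        (Real.Gamma ((m:ℝ)/q) * Real.Gamma n / Real.Gamma ((m:ℝ)/q + n)) := by
  have hq0 : (0:ℝ) < q := by linarith
  set k : ℝ := (lam/c) ^ (1/q) with hk_def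
  have hk : 0 < k := Real.rpow_pos_of_pos (div_pos hlam hc) _
  have hkq : k ^ q = lam / c := by
    rw [hk_def, ← Real.rpow_mul (div_pos hlam hc).le, one_div_mul_cancel hq0.ne',
      Real.rpow_one]
  have himg : (fun t : ℝ => k * t ^ (1/q)) '' Set.Ioi 0 = Set.Ioi (0:ℝ) := by
    ext y
    constructor
    · rintro ⟨t, ht, rfl⟩
      exact mul_pos hk (Real.rpow_pos_of_pos ht _)
    · intro hy
      rw [Set.mem_Ioi] at hy
      have hyk : 0 < y / k := div_pos hy hk
      refine ⟨(y/k) ^ q, Real.rpow_pos_of_pos hyk _, ?_⟩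
      show k * ((y/k) ^ q) ^ (1/q) = y
      rw [← Real.rpow_mul hyk.le, mul_one_div_cancel hq0.ne', Real.rpow_one]
      field_simp
  have hderiv : ∀ t ∈ Set.Ioi (0:ℝ), HasDerivWithinAt (fun t : ℝ => k * t ^ (1/q))
      (k * (1/q * t ^ (1/q - 1))) (Set.Ioi 0) t := by
    intro t ht
    exact ((Real.hasDerivAt_rpow_const (Or.inl (ne_of_gt ht))).const_mul k).hasDerivWithinAt
  have hinj : Set.InjOn (fun t : ℝ => k * t ^ (1/q)) (Set.Ioi 0) := by
    intro s hs t ht hst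
    have h1 : s ^ (1/q) = t ^ (1/q) := mul_left_cancel₀ hk.ne' hst
    have := congrArg (· ^ q) h1
    simpa [← Real.rpow_mul (le_of_lt hs), ← Real.rpow_mul (le_of_lt ht),
      one_div, inv_mul_cancel₀ hq0.ne'] using this
  rw [← himg, integral_image_eq_integral_abs_deriv_smul measurableSet_Ioi hderiv hinj]
  have hpt : ∀ t ∈ Set.Ioi (0:ℝ),
      |k * (1/q * t ^ (1/q - 1))| •
        ((k * t ^ (1/q)) ^ (m-1) * (lam + c * (k * t ^ (1/q)) ^ q) ^ (-(n:ℝ) - (m:ℝ)/q)) =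
      (lam ^ (-(n:ℝ)) * c ^ (-(m:ℝ)/q) / q) *
        (t ^ ((m:ℝ)/q - 1) * (1+t) ^ (-((m:ℝ)/q + (n:ℝ)))) := by
    intro t ht
    rw [Set.mem_Ioi] at ht
    have htq : (t ^ (1/q)) ^ q = t := by
      rw [← Real.rpow_mul ht.le, one_div_mul_cancel hq0.ne', Real.rpow_one]
    have ht1 : 0 < t ^ (1/q) := Real.rpow_pos_of_pos ht _
    have hbase : lam + c * (k * t ^ (1/q)) ^ q = lam * (1+t) := by
      rw [Real.mul_rpow hk.le ht1.le, hkq, htq]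
      field_simp
    have e1 : k * k ^ (m-1) = lam ^ ((m:ℝ)/q) * c ^ (-(m:ℝ)/q) := by
      rw [← pow_succ' k (m-1), Nat.sub_add_cancel hm, ← Real.rpow_natCast k m, hk_def,
        ← Real.rpow_mul (div_pos hlam hc).le,
        show 1/q * (m:ℝ) = (m:ℝ)/q by ring,
        Real.div_rpow hlam.le hc.le, div_eq_mul_inv, ← Real.rpow_neg hc.le, neg_div]
    have e2 : t ^ (1/q - 1) * (t ^ (1/q)) ^ (m-1) = t ^ ((m:ℝ)/q - 1) := by
      rw [← Real.rpow_natCast (t ^ (1/q)) (m-1), Nat.cast_sub hm, Nat.cast_one,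
        ← Real.rpow_mul ht.le, ← Real.rpow_add ht]
      congr 1
      field_simp
      ring
    have e3 : (lam + c * (k * t ^ (1/q)) ^ q) ^ (-(n:ℝ) - (m:ℝ)/q) =
        lam ^ (-(n:ℝ) - (m:ℝ)/q) * (1+t) ^ (-((m:ℝ)/q + (n:ℝ))) := by
      rw [hbase, Real.mul_rpow hlam.le (by linarith : (0:ℝ) ≤ 1+t)]
      congr 1
      ring
    have e4 : lam ^ ((m:ℝ)/q) * lam ^ (-(n:ℝ) - (m:ℝ)/q) = lam ^ (-(n:ℝ)) := by
      rw [← Real.rpow_add hlam]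
      congr 1
      ring
    rw [smul_eq_mul, abs_of_pos (by positivity), mul_pow, e3]
    calc k * (1/q * t ^ (1/q - 1)) *
          (k ^ (m-1) * (t ^ (1/q)) ^ (m-1) *
            (lam ^ (-(n:ℝ) - (m:ℝ)/q) * (1+t) ^ (-((m:ℝ)/q + (n:ℝ)))))
        = 1/q * ((k * k ^ (m-1)) * ((t ^ (1/q - 1) * (t ^ (1/q)) ^ (m-1)) *
            (lam ^ (-(n:ℝ) - (m:ℝ)/q) * (1+t) ^ (-((m:ℝ)/q + (n:ℝ)))))) := by ring
      _ = 1/q * ((lam ^ ((m:ℝ)/q) * c ^ (-(m:ℝ)/q)) * (t ^ ((m:ℝ)/q - 1) *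
            (lam ^ (-(n:ℝ) - (m:ℝ)/q) * (1+t) ^ (-((m:ℝ)/q + (n:ℝ)))))) := by rw [e1, e2]
      _ = (lam ^ (-(n:ℝ)) * c ^ (-(m:ℝ)/q) / q) *
            (t ^ ((m:ℝ)/q - 1) * (1+t) ^ (-((m:ℝ)/q + (n:ℝ)))) := by rw [← e4]; ring
  rw [setIntegral_congr_fun measurableSet_Ioi hpt, MeasureTheory.integral_const_mul]
  have ha : (0:ℝ) < (m:ℝ)/q := div_pos (by exact_mod_cast hm) hq0
  have hb : (0:ℝ) < (n:ℝ) := by exact_mod_cast hn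
  rw [show ∫ t in Set.Ioi (0:ℝ), t ^ ((m:ℝ)/q - 1) * (1+t) ^ (-((m:ℝ)/q + (n:ℝ))) =
      Real.Gamma ((m:ℝ)/q) * Real.Gamma n / Real.Gamma ((m:ℝ)/q + n) from beta_Ioi ha hb]

/-- The Lebesgue volume of the unit ball in `ℝ^k`. -/
noncomputable def ballVol (k : ℕ) : ℝ := Real.pi ^ ((k : ℝ) / 2) / Real.Gamma ((k : ℝ) / 2 + 1)

theorem stmt_5 (n m : ℕ) (hn : 1 ≤ n) (hm : 1 ≤ m) (q lam c : ℝ)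
    (hq : 1 < q) (hlam : 0 < lam) (hc : 0 < c) :
    ∫ v : EuclideanSpace ℝ (Fin m), (lam + c * ‖v‖ ^ q) ^ (-(n : ℝ) - m / q) =
      lam ^ (-(n : ℝ)) * c ^ (-(m : ℝ) / q) * ((m : ℝ) * ballVol m) *
        (Real.Gamma (n : ℝ) * Real.Gamma ((m : ℝ) / q)) / (q * Real.Gamma ((n : ℝ) + m / q)) := by
  haveI : Nonempty (Fin m) := ⟨⟨0, hm⟩⟩
  haveI : Nontrivial (EuclideanSpace ℝ (Fin m)) := inferInstance
  have key := MeasureTheory.integral_fun_norm_addHaar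
    (volume : Measure (EuclideanSpace ℝ (Fin m)))
    (fun y : ℝ => (lam + c * y ^ q) ^ (-(n : ℝ) - (m:ℝ) / q))
  simp only [finrank_euclideanSpace, Fintype.card_fin] at key
  rw [key]
  have hvol : (volume (Metric.ball (0 : EuclideanSpace ℝ (Fin m)) 1)).toReal = ballVol m := by
    rw [EuclideanSpace.volume_ball]
    simp only [Fintype.card_fin, ENNReal.ofReal_one, one_pow, one_mul]
    rw [ENNReal.toReal_ofReal (by positivity)]
    rw [ballVol, Real.sqrt_eq_rpow, ← Real.rpow_natCast (Real.pi ^ ((1:ℝ)/2)) m,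
      ← Real.rpow_mul Real.pi_nonneg, show (1:ℝ)/2 * (m:ℝ) = (m:ℝ)/2 by ring]
  rw [show volume.real (Metric.ball (0 : EuclideanSpace ℝ (Fin m)) 1) = ballVol m from hvol]
  have h1 := oneD n m hn hm q lam c hq hlam hc
  simp only [smul_eq_mul] at h1 ⊢
  rw [h1]
  have hG : Real.Gamma ((m:ℝ)/q + n) = Real.Gamma ((n:ℝ) + (m:ℝ)/q) := by rw [add_comm]
  rw [hG]
  ring
end

section
/- Let n ≥ 2 be an integer and let q be a real number with 1 < q ≤ 2. Define, for each positive integer m, K_{m,n,q} = (ω_m Γ(m/q + 1) / (ω_{m+n} Γ((m+n)/q + 1))) · (m^m n^n / (m+n)^{m+n})^{1/2 - 1/q}. Then lim_{m→∞} K_{m,n,q} = q^{n/q} (2π)^{-n/2} (e/n)^{n(1/q - 1/2)}. -/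
/-!
Since `ω_k = π^{k/2} / Γ(k/2 + 1)`, the quotient `K_{m,n,q}` is, up to `π^{-n/2}`, a ratio of two
Gamma quotients `Γ(x + a) / Γ(x)` with `x = m/2 + 1, a = n/2` and `x = m/q + 1, a = n/q`, times a
power of `m^m n^n / (m+n)^{m+n} = n^n (1 + n/m)^{-m} (m+n)^{-n}`. Wendel's limit
`Γ(x + a) / (Γ(x) x^a) → 1`, which for `0 ≤ a ≤ 1` is squeezed out of the log-convexity of `Γ` and
then propagated by `Γ(x + 1) = x Γ(x)`, turns each Gamma quotient into a power of `m + n`; these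
powers cancel against `(m+n)^{-n(1/2 - 1/q)}`, and `(1 + n/m)^m → e^n` does the rest.
-/

open Real Filter

open Topology

lemma tendsto_add_div_add_atTop (c d : ℝ) :
    Tendsto (fun x : ℝ => (x + c) / (x + d)) atTop (𝓝 1) := by
  have hden : Tendsto (fun x : ℝ => x + d) atTop atTop :=
    tendsto_atTop_add_const_right _ d tendsto_id
  have h := (tendsto_const_nhds (x := c - d)).div_atTop hden |>.const_add 1
  rw [add_zero] at h
  refine h.congr' ?_
  filter_upwards [hden.eventually_gt_atTop 0] with x hx
  field_simp
  ring

namespace Real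

lemma Gamma_add_le_Gamma_mul_rpow {x s : ℝ} (hx : 0 < x) (hs0 : 0 ≤ s) (hs1 : s ≤ 1) :
    Gamma (x + s) ≤ Gamma x * x ^ s := by
  have hconv := convexOn_log_Gamma.2 (Set.mem_Ioi.2 hx) (Set.mem_Ioi.2 (by linarith : 0 < x + 1))
    (sub_nonneg.2 hs1) hs0 (sub_add_cancel 1 s)
  simp only [smul_eq_mul, Function.comp_apply] at hconv
  rw [show (1 - s) * x + s * (x + 1) = x + s by ring, Gamma_add_one hx.ne',
    log_mul hx.ne' (Gamma_pos_of_pos hx).ne'] at hconv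
  have hlog : log (Gamma (x + s)) ≤ log (Gamma x * x ^ s) := by
    rw [log_mul (Gamma_pos_of_pos hx).ne' (rpow_pos_of_pos hx s).ne', log_rpow hx]
    linarith
  exact (log_le_log_iff (Gamma_pos_of_pos (by linarith)) (by positivity)).1 hlog

lemma Gamma_mul_rpow_mul_le_Gamma_add {x s : ℝ} (hx : 0 < x) (hs0 : 0 ≤ s) (hs1 : s ≤ 1) :
    Gamma x * x ^ s * (x / (x + s)) ^ (1 - s) ≤ Gamma (x + s) := by
  have hxs : 0 < x + s := by linarith
  have h := Gamma_add_le_Gamma_mul_rpow hxs (sub_nonneg.2 hs1) (by linarith)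
  rw [add_add_sub_cancel, Gamma_add_one hx.ne'] at h
  calc Gamma x * x ^ s * (x / (x + s)) ^ (1 - s)
      = x * Gamma x / (x + s) ^ (1 - s) := by
        rw [div_rpow hx.le hxs.le, rpow_sub hx, rpow_one]
        field_simp
    _ ≤ Gamma (x + s) := by
        rwa [div_le_iff₀ (rpow_pos_of_pos hxs _)]

lemma tendsto_Gamma_add_div_Gamma_mul_rpow_of_le_one {s : ℝ} (hs0 : 0 ≤ s) (hs1 : s ≤ 1) :
    Tendsto (fun x => Gamma (x + s) / (Gamma x * x ^ s)) atTop (𝓝 1) := by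
  have hlow : Tendsto (fun x : ℝ => (x / (x + s)) ^ (1 - s)) atTop (𝓝 1) := by
    simpa using (tendsto_add_div_add_atTop 0 s).rpow_const (Or.inl one_ne_zero) (p := 1 - s)
  refine tendsto_of_tendsto_of_tendsto_of_le_of_le' hlow tendsto_const_nhds ?_ ?_ <;>
    filter_upwards [eventually_gt_atTop 0] with x hx
  · exact (le_div_iff₀' (by positivity)).2 (Gamma_mul_rpow_mul_le_Gamma_add hx hs0 hs1)
  · exact (div_le_one (by positivity)).2 (Gamma_add_le_Gamma_mul_rpow hx hs0 hs1)

lemma tendsto_Gamma_add_div_Gamma_mul_rpow {a : ℝ} (ha : 0 ≤ a) :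
    Tendsto (fun x => Gamma (x + a) / (Gamma x * x ^ a)) atTop (𝓝 1) := by
  obtain ⟨k, hk⟩ := exists_nat_ge a
  induction k generalizing a with
  | zero => exact tendsto_Gamma_add_div_Gamma_mul_rpow_of_le_one ha (hk.trans (by norm_num))
  | succ k ih =>
    rcases le_or_gt a 1 with ha1 | ha1
    · exact tendsto_Gamma_add_div_Gamma_mul_rpow_of_le_one ha ha1
    have h := (ih (sub_nonneg.2 ha1.le) (by push_cast at hk; linarith)).mul
      (by simpa using tendsto_add_div_add_atTop (a - 1) 0)
    rw [one_mul] at h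
    refine h.congr' ?_
    filter_upwards [eventually_gt_atTop 0] with x hx
    have hΓ : Gamma (x + a) = (x + (a - 1)) * Gamma (x + (a - 1)) := by
      rw [← Gamma_add_one (by linarith), add_assoc, sub_add_cancel]
    rw [hΓ, show x ^ a = x ^ (a - 1) * x by rw [← rpow_add_one hx.ne', sub_add_cancel]]
    have := Gamma_pos_of_pos hx
    have := rpow_pos_of_pos hx (a - 1)
    field_simp

end Real

noncomputable def gammaShiftRatio (a b t : ℝ) : ℝ :=
  Gamma ((t + a) / b + 1) / (Gamma (t / b + 1) * (t + a) ^ (a / b))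

lemma tendsto_gammaShiftRatio {a b : ℝ} (ha : 0 ≤ a) (hb : 0 < b) :
    Tendsto (gammaShiftRatio a b) atTop (𝓝 (b ^ (-(a / b)))) := by
  have hx : Tendsto (fun t : ℝ => t / b + 1) atTop atTop :=
    tendsto_atTop_add_const_right _ 1 (tendsto_id.atTop_div_const hb)
  have hR := (tendsto_Gamma_add_div_Gamma_mul_rpow (div_nonneg ha hb.le)).comp hx
  have hratio : Tendsto (fun t : ℝ => ((t / b + 1) / (t + a)) ^ (a / b)) atTop
      (𝓝 (b⁻¹ ^ (a / b))) := by
    have h := ((tendsto_add_div_add_atTop b a).const_mul b⁻¹).rpow_const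
      (Or.inl (by positivity)) (p := a / b)
    rw [mul_one] at h
    refine h.congr fun t => ?_
    congr 1
    field_simp
  have h := hR.mul hratio
  rw [one_mul, inv_rpow hb.le, ← rpow_neg hb.le] at h
  refine h.congr' ?_
  filter_upwards [eventually_gt_atTop 0] with t ht
  have hxpos : 0 < t / b + 1 := by positivity
  have htapos : 0 < t + a := by linarith
  rw [gammaShiftRatio, Function.comp_apply, show t / b + 1 + a / b = (t + a) / b + 1 by ring,
    div_rpow hxpos.le htapos.le]
  have := Gamma_pos_of_pos hxpos
  have := rpow_pos_of_pos hxpos (a / b)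
  have := rpow_pos_of_pos htapos (a / b)
  field_simp

lemma ballVol_div_ballVol_add (k n : ℕ) :
    ballVol k / ballVol (k + n) =
      π ^ (-((n : ℝ) / 2)) * (Gamma (((k : ℝ) + n) / 2 + 1) / Gamma ((k : ℝ) / 2 + 1)) := by
  have hk := Gamma_pos_of_pos (by positivity : (0 : ℝ) < (k : ℝ) / 2 + 1)
  have hkn := Gamma_pos_of_pos (by positivity : (0 : ℝ) < ((k : ℝ) + n) / 2 + 1)
  simp only [ballVol, Nat.cast_add, add_div, rpow_add pi_pos, rpow_neg pi_pos.le]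
  have := rpow_pos_of_pos pi_pos ((k : ℝ) / 2)
  have := rpow_pos_of_pos pi_pos ((n : ℝ) / 2)
  field_simp

lemma pow_mul_pow_div_add_pow (m n : ℕ) (hm : 0 < m) :
    (m : ℝ) ^ m * (n : ℝ) ^ n / ((m : ℝ) + n) ^ (m + n) =
      (n : ℝ) ^ n / (1 + (n : ℝ) / m) ^ m / ((m : ℝ) + n) ^ n := by
  have hm' : (0 : ℝ) < m := Nat.cast_pos.2 hm
  rw [one_add_div hm'.ne', div_pow, pow_add]
  field_simp

lemma ballVol_ratio_eq (m n : ℕ) (hm : 0 < m) {q : ℝ} (hq : 0 < q) :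
    ballVol m * Gamma ((m : ℝ) / q + 1) / (ballVol (m + n) * Gamma (((m : ℝ) + n) / q + 1)) *
        ((m : ℝ) ^ m * (n : ℝ) ^ n / ((m : ℝ) + n) ^ (m + n)) ^ ((1 : ℝ) / 2 - 1 / q) =
      π ^ (-((n : ℝ) / 2)) * (gammaShiftRatio n 2 m / gammaShiftRatio n q m) *
        ((n : ℝ) ^ n / (1 + (n : ℝ) / m) ^ m) ^ ((1 : ℝ) / 2 - 1 / q) := by
  have hm' : (0 : ℝ) < m := Nat.cast_pos.2 hm
  have hmn : (0 : ℝ) < m + n := by positivity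
  have hpow : (((m : ℝ) + n) ^ n) ^ ((1 : ℝ) / 2 - 1 / q) =
      ((m : ℝ) + n) ^ ((n : ℝ) / 2) / ((m : ℝ) + n) ^ ((n : ℝ) / q) := by
    rw [← rpow_natCast, ← rpow_mul hmn.le, ← rpow_sub hmn]
    ring_nf
  rw [mul_div_mul_comm, ballVol_div_ballVol_add, pow_mul_pow_div_add_pow m n hm,
    div_rpow (by positivity) (by positivity), hpow]
  simp only [gammaShiftRatio]
  have := Gamma_pos_of_pos (by positivity : (0 : ℝ) < (m : ℝ) / q + 1)
  have := Gamma_pos_of_pos (by positivity : (0 : ℝ) < ((m : ℝ) + n) / q + 1)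
  have := Gamma_pos_of_pos (by positivity : (0 : ℝ) < (m : ℝ) / 2 + 1)
  have := rpow_pos_of_pos hmn ((n : ℝ) / 2)
  have := rpow_pos_of_pos hmn ((n : ℝ) / q)
  field_simp

theorem stmt_9_general (n : ℕ) (q : ℝ) (hq1 : 1 < q) :
    Filter.Tendsto
      (fun m : ℕ =>
        (ballVol m * Real.Gamma ((m : ℝ) / q + 1) /
            (ballVol (m + n) * Real.Gamma (((m : ℝ) + n) / q + 1))) *
          ((m : ℝ) ^ m * (n : ℝ) ^ n / ((m : ℝ) + n) ^ (m + n)) ^ ((1 : ℝ) / 2 - 1 / q))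
      Filter.atTop
      (nhds (q ^ ((n : ℝ) / q) * (2 * Real.pi) ^ (-(n : ℝ) / 2) *
        (Real.exp 1 / n) ^ ((n : ℝ) * (1 / q - 1 / 2)))) := by
  have hq : 0 < q := by linarith
  have hG {b : ℝ} (hb : 0 < b) :=
    (tendsto_gammaShiftRatio n.cast_nonneg hb).comp tendsto_natCast_atTop_atTop
  have hE : Tendsto (fun m : ℕ => ((n : ℝ) ^ n / (1 + (n : ℝ) / m) ^ m) ^ ((1 : ℝ) / 2 - 1 / q))
      atTop (𝓝 (((n : ℝ) ^ n / exp n) ^ ((1 : ℝ) / 2 - 1 / q))) :=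
    (tendsto_const_nhds.div (tendsto_one_add_div_pow_exp (n : ℝ)) (exp_ne_zero _)).rpow_const
      (Or.inl (div_ne_zero (mod_cast Nat.pow_self_pos.ne') (exp_ne_zero _)))
  have hlim :=
    (((hG two_pos).div (hG hq) (by positivity)).const_mul (π ^ (-((n : ℝ) / 2)))).mul hE
  have hconst : q ^ ((n : ℝ) / q) * (2 * π) ^ (-(n : ℝ) / 2) *
      (exp 1 / n) ^ ((n : ℝ) * (1 / q - 1 / 2)) =
      π ^ (-((n : ℝ) / 2)) * (2 ^ (-((n : ℝ) / 2)) / q ^ (-((n : ℝ) / q))) *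
        ((n : ℝ) ^ n / exp n) ^ ((1 : ℝ) / 2 - 1 / q) := by
    rw [← exp_one_pow, ← div_pow, ← rpow_natCast, ← rpow_mul (by positivity),
      show (n : ℝ) * (1 / q - 1 / 2) = -((n : ℝ) * (1 / 2 - 1 / q)) by ring,
      rpow_neg (by positivity), ← inv_rpow (by positivity), inv_div,
      mul_rpow zero_le_two pi_pos.le, neg_div, rpow_neg hq.le, div_inv_eq_mul, rpow_neg zero_le_two]
    ring
  rw [hconst]
  exact hlim.congr' <| (eventually_gt_atTop 0).mono fun m hm => (ballVol_ratio_eq m n hm hq).symm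

theorem stmt_9 (n : ℕ) (hn : 2 ≤ n) (q : ℝ) (hq1 : 1 < q) (hq2 : q ≤ 2) :
    Filter.Tendsto
      (fun m : ℕ =>
        (ballVol m * Real.Gamma ((m : ℝ) / q + 1) /
            (ballVol (m + n) * Real.Gamma (((m : ℝ) + n) / q + 1))) *
          ((m : ℝ) ^ m * (n : ℝ) ^ n / ((m : ℝ) + n) ^ (m + n)) ^ ((1 : ℝ) / 2 - 1 / q))
      Filter.atTop
      (nhds (q ^ ((n : ℝ) / q) * (2 * Real.pi) ^ (-(n : ℝ) / 2) *
        (Real.exp 1 / n) ^ ((n : ℝ) * (1 / q - 1 / 2)))) :=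
  stmt_9_general n q hq1
end

section
/- Let n ≥ 2 and m ≥ 1 be integers and define, for 1 < p < n, S̃(n,m,p) = (p*/n)(1 - 1/n) p^{-1/p} p'^{-1/p'} (ω_m Γ(m/p' + 1) / (ω_{n+m} Γ((n+m)/p' + 1)) · Γ(n)/Γ(n/p))^{1/n} with p' = p/(p-1) and p* = pn/(n-p), and C(n,m) = max{ (1/n)(m ω_m / ((n+m) ω_{n+m}))^{1/n}, 1/(n ω_n^{1/n}) }. Then lim_{p→1^+} S̃(n,m,p) = (1/n)(ω_m/ω_{n+m})^{1/n}, and moreover C(n,m) < (1/n)(ω_m/ω_{n+m})^{1/n}. -/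
open Real Filter

/-- The constant `S̃(n,m,p)` from the `L^p`-Sobolev inequality for minimal submanifolds,
where `p' = p/(p-1)` and `p* = pn/(n-p)`. -/
noncomputable def tildeS (n m : ℕ) (p : ℝ) : ℝ :=
  ((p * n / ((n : ℝ) - p)) / n) * (1 - 1 / (n : ℝ)) * p ^ (-(1 : ℝ) / p) *
    (p / (p - 1)) ^ (-(1 : ℝ) / (p / (p - 1))) *
    ((ballVol m * Real.Gamma ((m : ℝ) / (p / (p - 1)) + 1) /
          (ballVol (n + m) * Real.Gamma (((n : ℝ) + m) / (p / (p - 1)) + 1))) *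
        (Real.Gamma (n : ℝ) / Real.Gamma ((n : ℝ) / p))) ^ ((1 : ℝ) / n)

/-- The Brendle constant. -/
noncomputable def Cnm (n m : ℕ) : ℝ :=
  max ((1 / (n : ℝ)) * ((m : ℝ) * ballVol m / (((n : ℝ) + m) * ballVol (n + m))) ^ ((1 : ℝ) / n))
    (1 / ((n : ℝ) * ballVol n ^ ((1 : ℝ) / n)))

/-!
As `p → 1⁺` the conjugate exponent `p' = p/(p-1)` tends to `∞`, so `p'^{-1/p'} → 1` and the Gamma
factors `Γ(k/p' + 1)` tend to `Γ(1) = 1`; every other factor is continuous at `p = 1`, and the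
prefactor tends to `(1/(n-1))(1 - 1/n) = 1/n`.

For the inequality, the first entry of `C(n,m)` is smaller since `m/(n+m) < 1`. The second one is
smaller since `ω_{n+m} < ω_n ω_m`: the powers of `π` cancel and what remains is
`Γ(m/2 + 1) Γ(n/2 + 1) < Γ((n+m)/2 + 1)`, a consequence of the log-convexity of `Γ`.
-/

open Set Topology

theorem ConvexOn.add_le_add_of_add_eq {𝕜 : Type*} [Field 𝕜] [LinearOrder 𝕜]
    [IsStrictOrderedRing 𝕜] {s : Set 𝕜} {f : 𝕜 → 𝕜} (hf : ConvexOn 𝕜 s f) {a b x y : 𝕜}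
    (ha : a ∈ s) (hb : b ∈ s) (hax : a ≤ x) (hay : a ≤ y) (hxy : x + y = a + b) :
    f x + f y ≤ f a + f b := by
  rcases (show a ≤ b by linarith).eq_or_lt with rfl | hab
  · obtain rfl : x = a := by linarith
    obtain rfl : y = x := by linarith
    rfl
  -- `x` and `y` are the convex combinations of `a` and `b` with swapped weights `1 - t`, `t`.
  set t := (x - a) / (b - a)
  have ht₀ : 0 ≤ t := div_nonneg (sub_nonneg.2 hax) (sub_nonneg.2 hab.le)
  have ht₁ : 0 ≤ 1 - t := by
    rw [sub_nonneg, div_le_one (sub_pos.2 hab)]; linarith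
  have hx : (1 - t) • a + t • b = x := by
    simp only [smul_eq_mul, t]; field_simp; ring
  have hy : t • a + (1 - t) • b = y := by
    simp only [smul_eq_mul] at hx ⊢; linear_combination -hx - hxy
  have h₁ := hf.2 ha hb ht₁ ht₀ (by ring)
  have h₂ := hf.2 ha hb ht₀ ht₁ (by ring)
  rw [hx] at h₁
  rw [hy] at h₂
  simp only [smul_eq_mul] at h₁ h₂
  linarith

namespace Real

theorem continuousAt_Gamma_of_pos {x : ℝ} (hx : 0 < x) : ContinuousAt Gamma x :=
  differentiableOn_Gamma_Ioi.continuousOn.continuousAt (Ioi_mem_nhds hx)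

theorem Gamma_mul_Gamma_le_Gamma_add_sub_one {x y : ℝ} (hx : 1 ≤ x) (hy : 1 ≤ y) :
    Gamma x * Gamma y ≤ Gamma (x + y - 1) := by
  have hlog := convexOn_log_Gamma.add_le_add_of_add_eq (a := 1) (b := x + y - 1)
    (mem_Ioi.2 one_pos) (mem_Ioi.2 (by linarith)) hx hy (by ring)
  have hx₀ := Gamma_pos_of_pos (by linarith : 0 < x)
  have hy₀ := Gamma_pos_of_pos (by linarith : 0 < y)
  simp only [Function.comp_apply, Gamma_one, log_one, zero_add] at hlog
  rw [← log_mul hx₀.ne' hy₀.ne'] at hlog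
  exact (log_le_log_iff (mul_pos hx₀ hy₀) (Gamma_pos_of_pos (by linarith))).1 hlog

theorem Gamma_mul_Gamma_lt_Gamma_add_sub_one {x y : ℝ} (hx : 1 < x) (hy : 2 ≤ y) :
    Gamma x * Gamma y < Gamma (x + y - 1) := by
  -- Peel off one factor with `Γ(s + 1) = s Γ(s)` on both sides; then `y - 1 < x + y - 2`.
  calc Gamma x * Gamma y = (y - 1) * (Gamma x * Gamma (y - 1)) := by
        rw [mul_left_comm, ← Gamma_add_one (by linarith), sub_add_cancel]
    _ ≤ (y - 1) * Gamma (x + y - 2) := by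
        refine mul_le_mul_of_nonneg_left ?_ (by linarith)
        simpa only [show x + (y - 1) - 1 = x + y - 2 by ring] using
          Gamma_mul_Gamma_le_Gamma_add_sub_one hx.le (by linarith : 1 ≤ y - 1)
    _ < (x + y - 2) * Gamma (x + y - 2) :=
        mul_lt_mul_of_pos_right (by linarith) (Gamma_pos_of_pos (by linarith))
    _ = Gamma (x + y - 1) := by
        rw [show x + y - 1 = x + y - 2 + 1 by ring, Gamma_add_one (by linarith)]

end Real

theorem ballVol_pos (k : ℕ) : 0 < ballVol k :=
  div_pos (rpow_pos_of_pos pi_pos _) (Gamma_pos_of_pos (by positivity))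

theorem ballVol_add_lt_mul {n m : ℕ} (hn : 2 ≤ n) (hm : 1 ≤ m) :
    ballVol (n + m) < ballVol m * ballVol n := by
  have hn' : (2 : ℝ) ≤ n := by exact_mod_cast hn
  have hm' : (1 : ℝ) ≤ m := by exact_mod_cast hm
  have hΓ := Gamma_mul_Gamma_lt_Gamma_add_sub_one (x := (m : ℝ) / 2 + 1) (y := (n : ℝ) / 2 + 1)
    (by linarith) (by linarith)
  unfold ballVol
  rw [show (m : ℝ) / 2 + 1 + ((n : ℝ) / 2 + 1) - 1 = ((n : ℝ) + m) / 2 + 1 by ring] at hΓ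
  rw [div_mul_div_comm, ← rpow_add pi_pos, Nat.cast_add,
    show (m : ℝ) / 2 + (n : ℝ) / 2 = ((n : ℝ) + m) / 2 by ring]
  exact div_lt_div_of_pos_left (by positivity) (by positivity) hΓ

theorem Cnm_lt {n m : ℕ} (hn : 2 ≤ n) (hm : 1 ≤ m) :
    Cnm n m < 1 / (n : ℝ) * (ballVol m / ballVol (n + m)) ^ ((1 : ℝ) / n) := by
  have hn₀ : (0 : ℝ) < n := Nat.cast_pos.2 (by omega)
  have hm₀ := ballVol_pos m
  have hnm₀ := ballVol_pos (n + m)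
  refine max_lt (mul_lt_mul_of_pos_left (rpow_lt_rpow (by positivity) ?_ (by positivity))
    (by positivity)) ?_
  · rw [mul_div_mul_comm]
    refine mul_lt_of_lt_one_left (div_pos hm₀ hnm₀) ((div_lt_one (by positivity)).2 ?_)
    linarith
  · have hω : 1 / ballVol n < ballVol m / ballVol (n + m) := by
      rw [div_lt_div_iff₀ (ballVol_pos n) hnm₀, one_mul]
      exact ballVol_add_lt_mul hn hm
    calc 1 / ((n : ℝ) * ballVol n ^ ((1 : ℝ) / n))
        = 1 / (n : ℝ) * (1 / ballVol n) ^ ((1 : ℝ) / n) := by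
          rw [div_rpow zero_le_one (ballVol_pos n).le, one_rpow, one_div_mul_one_div]
      _ < 1 / (n : ℝ) * (ballVol m / ballVol (n + m)) ^ ((1 : ℝ) / n) := by
          gcongr
          exact one_div_nonneg.2 (ballVol_pos n).le

theorem tendsto_div_sub_one_nhdsGT_one : Tendsto (fun p : ℝ => p / (p - 1)) (𝓝[>] 1) atTop := by
  have hsub : Tendsto (fun p : ℝ => p - 1) (𝓝[>] 1) (𝓝[>] 0) :=
    tendsto_nhdsWithin_iff.2
      ⟨by simpa using ((continuous_sub_right (1 : ℝ)).tendsto 1).mono_left nhdsWithin_le_nhds,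
        eventually_nhdsWithin_of_forall fun _ hp => mem_Ioi.2 (sub_pos.2 hp)⟩
  simpa only [div_eq_mul_inv, Function.comp_def, id_eq] using
    (tendsto_nhdsWithin_of_tendsto_nhds tendsto_id).pos_mul_atTop one_pos
      (tendsto_inv_nhdsGT_zero.comp hsub)

theorem tendsto_Gamma_div_add_one_atTop (a : ℝ) :
    Tendsto (fun q : ℝ => Gamma (a / q + 1)) atTop (𝓝 1) := by
  have h : Tendsto (fun q : ℝ => a / q + 1) atTop (𝓝 1) := by
    simpa using (tendsto_const_nhds.div_atTop (tendsto_id (α := ℝ))).add_const 1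
  simpa [Function.comp_def] using (continuousAt_Gamma_of_pos one_pos).tendsto.comp h

theorem tendsto_ballVol_Gamma_ratio_nhdsGT_one {n : ℕ} (hn : 0 < n) (m : ℕ) :
    Tendsto (fun p : ℝ =>
      (ballVol m * Gamma ((m : ℝ) / (p / (p - 1)) + 1) /
          (ballVol (n + m) * Gamma (((n : ℝ) + m) / (p / (p - 1)) + 1))) *
        (Gamma (n : ℝ) / Gamma ((n : ℝ) / p)))
      (𝓝[>] 1) (𝓝 (ballVol m / ballVol (n + m))) := by
  have hn₀ : (0 : ℝ) < n := Nat.cast_pos.2 hn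
  have hq := tendsto_div_sub_one_nhdsGT_one
  have hdiv : Tendsto (fun p : ℝ => (n : ℝ) / p) (𝓝[>] 1) (𝓝 n) := by
    have hcont : ContinuousAt (fun p : ℝ => (n : ℝ) / p) 1 :=
      continuousAt_const.div continuousAt_id one_ne_zero
    simpa using hcont.tendsto.mono_left nhdsWithin_le_nhds
  have := ((((tendsto_Gamma_div_add_one_atTop m).comp hq).const_mul (ballVol m)).div
    (((tendsto_Gamma_div_add_one_atTop ((n : ℝ) + m)).comp hq).const_mul (ballVol (n + m)))
    (by simp [(ballVol_pos _).ne'])).mul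
    ((tendsto_const_nhds (x := Gamma n)).div ((continuousAt_Gamma_of_pos hn₀).tendsto.comp hdiv)
      (Gamma_pos_of_pos hn₀).ne')
  simpa [div_self (Gamma_pos_of_pos hn₀).ne'] using this

theorem tendsto_tildeS_nhdsGT_one {n : ℕ} (hn : 1 < n) (m : ℕ) :
    Tendsto (tildeS n m) (𝓝[>] 1)
      (𝓝 (1 / (n : ℝ) * (ballVol m / ballVol (n + m)) ^ ((1 : ℝ) / n))) := by
  have hn₁ : (1 : ℝ) < n := by exact_mod_cast hn
  have hprefactor : Tendsto (fun p : ℝ => ((p * n / ((n : ℝ) - p)) / n) * (1 - 1 / (n : ℝ)))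
      (𝓝[>] 1) (𝓝 (1 / n)) := by
    have hcont : ContinuousAt (fun p : ℝ => ((p * n / ((n : ℝ) - p)) / n) * (1 - 1 / (n : ℝ))) 1 :=
      by fun_prop (disch := linarith)
    convert hcont.tendsto.mono_left nhdsWithin_le_nhds using 2
    field_simp [(sub_pos.2 hn₁).ne']
  have hpow : Tendsto (fun p : ℝ => p ^ (-(1 : ℝ) / p)) (𝓝[>] 1) (𝓝 1) := by
    have hcont : ContinuousAt (fun p : ℝ => p ^ (-(1 : ℝ) / p)) 1 :=
      continuousAt_id.rpow (continuousAt_const.div continuousAt_id one_ne_zero) (Or.inl one_ne_zero)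
    simpa using hcont.tendsto.mono_left nhdsWithin_le_nhds
  have := ((hprefactor.mul hpow).mul (tendsto_rpow_neg_div.comp tendsto_div_sub_one_nhdsGT_one)).mul
    ((tendsto_ballVol_Gamma_ratio_nhdsGT_one (Nat.zero_lt_of_lt hn) m).rpow_const (p := 1 / (n : ℝ))
      (Or.inl (div_pos (ballVol_pos m) (ballVol_pos _)).ne'))
  rw [mul_one, mul_one] at this
  exact this

theorem stmt_15 (n m : ℕ) (hn : 2 ≤ n) (hm : 1 ≤ m) :
    Filter.Tendsto (fun p : ℝ => tildeS n m p) (nhdsWithin 1 (Set.Ioi 1))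
        (nhds ((1 / (n : ℝ)) * (ballVol m / ballVol (n + m)) ^ ((1 : ℝ) / n))) ∧
      Cnm n m < (1 / (n : ℝ)) * (ballVol m / ballVol (n + m)) ^ ((1 : ℝ) / n) :=
  ⟨tendsto_tildeS_nhdsGT_one hn m, Cnm_lt hn hm⟩
end
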